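/- Let d ≥ 1, let F be a d×d real positive definite matrix, let ε be a random vector with distribution N(0, I_d), and let ℓ > 0. Then 2 · E[Φ(−(ℓ/(2√d))·‖ε‖_F)] ≥ 2 · Φ(−(ℓ/2)·√((1/d) Σ_{i=1}^d F_{ii})). (Lower bound on the expected acceptance probability via Jensen's inequality, using that E[‖ε‖²_F] = Σ_{i=1}^d F_{ii}.) -/

import Mathlib

open MeasureTheory ProbabilityTheory Real Matrix Filter

/-- CDF of the standard normal distribution. -/
noncomputable def stdNormalCDF (x : ℝ) : ℝ :=
  ((gaussianReal 0 1) (Set.Iic x)).toReal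

/-- Quadratic form `vᵀ A v`. -/
noncomputable def quadForm {d : ℕ} (A : Matrix (Fin d) (Fin d) ℝ) (v : Fin d → ℝ) : ℝ :=
  v ⬝ᵥ (A *ᵥ v)

/-- Density of the `d`-dimensional Gaussian with mean `μ` and covariance `S`. -/
noncomputable def mvGaussianPdf {d : ℕ} (μ : Fin d → ℝ) (S : Matrix (Fin d) (Fin d) ℝ)
    (x : Fin d → ℝ) : ℝ :=
  (2 * Real.pi) ^ (-(d : ℝ) / 2) * S.det ^ (-(1 : ℝ) / 2) *
    Real.exp (-((x - μ) ⬝ᵥ (S⁻¹ *ᵥ (x - μ))) / 2)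

/-- The `d`-dimensional Gaussian distribution `N(μ, S)`. -/
noncomputable def mvGaussian {d : ℕ} (μ : Fin d → ℝ) (S : Matrix (Fin d) (Fin d) ℝ) :
    Measure (Fin d → ℝ) :=
  volume.withDensity (fun x => ENNReal.ofReal (mvGaussianPdf μ S x))

/-! With `c = ℓ / (2√d)`, the function `x ↦ Φ(-c√x)` is convex on `[0, ∞)`, so it lies
above its tangent line at `m = E‖ε‖²_F`; taking expectations of that inequality is Jensen's
inequality. The mean is `E[εᵀ F ε] = tr F` because `N(0, I_d)` is the product of `d` standard
normal laws, so the coordinates of `ε` are independent, centred and of unit variance. -/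

open scoped ENNReal

lemma mvGaussianPdf_zero_one {d : ℕ} (x : Fin d → ℝ) :
    mvGaussianPdf 0 1 x = ∏ i, gaussianPDFReal 0 1 (x i) := by
  simp only [mvGaussianPdf, gaussianPDFReal, det_one, one_rpow, mul_one, sub_zero, inv_one,
    one_mulVec, NNReal.coe_one, Finset.prod_mul_distrib, ← Real.exp_sum, Finset.prod_const,
    Finset.card_univ, Fintype.card_fin, dotProduct]
  congr 1
  · rw [Real.sqrt_eq_rpow, ← Real.rpow_neg (by positivity),
      ← Real.rpow_mul_natCast (by positivity)]
    ring_nf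
  · rw [← Finset.sum_div, ← Finset.sum_neg_distrib]
    simp only [sq]

lemma mvGaussian_zero_one {d : ℕ} :
    mvGaussian (0 : Fin d → ℝ) 1 = Measure.pi fun _ => gaussianReal 0 1 := by
  refine (Measure.pi_eq fun s hs => ?_).symm
  have hbox : (Set.univ.pi s).indicator (mvGaussianPdf 0 1)
      = fun x => ∏ i, (s i).indicator (gaussianPDFReal 0 1) (x i) := funext fun x => by
    classical simp [Set.indicator, mvGaussianPdf_zero_one, Fintype.prod_ite_zero]
  have hint :
      Integrable (fun x : Fin d → ℝ => ∏ i, (s i).indicator (gaussianPDFReal 0 1) (x i)) :=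
    Integrable.fintype_prod fun i => (integrable_gaussianPDFReal 0 1).indicator (hs i)
  have hpdf : ∀ x : Fin d → ℝ, 0 ≤ mvGaussianPdf 0 1 x := fun x => by
    rw [mvGaussianPdf_zero_one]
    exact Finset.prod_nonneg fun i _ => gaussianPDFReal_nonneg 0 1 _
  rw [mvGaussian, withDensity_apply _ (MeasurableSet.univ_pi hs),
    ← ofReal_integral_eq_lintegral_ofReal
      ((integrable_indicator_iff (MeasurableSet.univ_pi hs)).1 (hbox ▸ hint))
      (Eventually.of_forall hpdf),
    ← integral_indicator (MeasurableSet.univ_pi hs), hbox, integral_fintype_prod_volume_eq_prod,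
    ENNReal.ofReal_prod_of_nonneg fun i _ => integral_nonneg fun t => Set.indicator_nonneg
      (fun t _ => gaussianPDFReal_nonneg 0 1 t) t]
  refine Finset.prod_congr rfl fun i _ => ?_
  rw [integral_indicator (hs i), gaussianReal_apply_eq_integral 0 one_ne_zero]

section ProductMoments

variable {ι : Type*} [Fintype ι] {μ : ι → Measure ℝ} [∀ i, IsProbabilityMeasure (μ i)]

lemma memLp_eval_pi {p : ℝ≥0∞} {i : ι} (h : MemLp id p (μ i)) :
    MemLp (fun x => x i) p (Measure.pi μ) :=
  h.comp_measurePreserving (measurePreserving_eval μ i)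

lemma integrable_eval_mul_eval_pi (hμ : ∀ i, MemLp id 2 (μ i)) (i j : ι) :
    Integrable (fun x => x i * x j) (Measure.pi μ) :=
  (memLp_eval_pi (hμ i)).integrable_mul (memLp_eval_pi (hμ j))

lemma integral_eval_mul_eval_pi [DecidableEq ι] (i j : ι) :
    ∫ x, x i * x j ∂Measure.pi μ =
      if i = j then ∫ t, t ^ 2 ∂μ i else (∫ t, t ∂μ i) * ∫ t, t ∂μ j := by
  split_ifs with hij
  · subst hij
    simp_rw [← sq]
    exact integral_comp_eval (μ := μ) (f := fun t : ℝ => t ^ 2)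
      (continuous_pow 2).aestronglyMeasurable
  · have hindep :=
      (iIndepFun_pi (μ := μ) (X := fun _ t => t) fun _ => aemeasurable_id).indepFun hij
    rw [hindep.integral_fun_mul_eq_mul_integral (measurable_pi_apply i).aestronglyMeasurable
      (measurable_pi_apply j).aestronglyMeasurable, integral_eval, integral_eval]

end ProductMoments

lemma integral_eval_mul_eval_stdGaussian {d : ℕ} (i j : Fin d) :
    ∫ x, x i * x j ∂mvGaussian 0 1 = if i = j then 1 else 0 := by
  have hsq : ∫ t, t ^ 2 ∂gaussianReal 0 1 = 1 := by
    have := variance_eq_sub (memLp_id_gaussianReal (μ := 0) (v := 1) 2)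
    simp only [variance_id_gaussianReal, Pi.pow_apply, id, integral_id_gaussianReal] at this
    norm_num at this
    exact this.symm
  simp [mvGaussian_zero_one, integral_eval_mul_eval_pi, integral_id_gaussianReal, hsq]

lemma integrable_eval_mul_eval_stdGaussian {d : ℕ} (i j : Fin d) :
    Integrable (fun x => x i * x j) (mvGaussian 0 1) := by
  rw [mvGaussian_zero_one]
  exact integrable_eval_mul_eval_pi (fun _ => memLp_id_gaussianReal 2) i j

section QuadForm

variable {d : ℕ}

lemma quadForm_eq_sum (A : Matrix (Fin d) (Fin d) ℝ) (x : Fin d → ℝ) :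
    quadForm A x = ∑ i, ∑ j, A i j * (x i * x j) := by
  simp only [quadForm, dotProduct, mulVec, Finset.mul_sum]
  exact Finset.sum_congr rfl fun i _ => Finset.sum_congr rfl fun j _ => by ring

lemma continuous_quadForm (A : Matrix (Fin d) (Fin d) ℝ) : Continuous (quadForm A) := by
  simp_rw [funext (quadForm_eq_sum A)]
  fun_prop

lemma quadForm_nonneg {A : Matrix (Fin d) (Fin d) ℝ} (hA : A.PosSemidef) (x : Fin d → ℝ) :
    0 ≤ quadForm A x := by
  simpa [quadForm] using hA.dotProduct_mulVec_nonneg x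

variable {ν : Measure (Fin d → ℝ)} (hν : ∀ i j, Integrable (fun x => x i * x j) ν)
include hν

lemma integrable_quadForm (A : Matrix (Fin d) (Fin d) ℝ) : Integrable (quadForm A) ν := by
  simp_rw [funext (quadForm_eq_sum A)]
  exact integrable_finsetSum _ fun i _ => integrable_finsetSum _ fun j _ => (hν i j).const_mul _

lemma integral_quadForm (A : Matrix (Fin d) (Fin d) ℝ) :
    ∫ x, quadForm A x ∂ν = ∑ i, ∑ j, A i j * ∫ x, x i * x j ∂ν := by
  have hrow : ∀ i, Integrable (fun x => ∑ j, A i j * (x i * x j)) ν := fun i =>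
    integrable_finsetSum _ fun j _ => (hν i j).const_mul _
  simp_rw [quadForm_eq_sum]
  refine (integral_finsetSum _ fun i _ => hrow i).trans (Finset.sum_congr rfl fun i _ => ?_)
  refine (integral_finsetSum _ fun j _ => (hν i j).const_mul _).trans ?_
  simp_rw [integral_const_mul]

end QuadForm

lemma integral_quadForm_stdGaussian {d : ℕ} (A : Matrix (Fin d) (Fin d) ℝ) :
    ∫ x, quadForm A x ∂mvGaussian 0 1 = A.trace := by
  simp [integral_quadForm integrable_eval_mul_eval_stdGaussian,
    integral_eval_mul_eval_stdGaussian, trace]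

lemma stdNormalCDF_eq_cdf : stdNormalCDF = cdf (gaussianReal 0 1) :=
  funext fun x => by rw [cdf_eq_real, measureReal_def, stdNormalCDF]

lemma integrable_stdNormalCDF_comp {α : Type*} [MeasurableSpace α] {μ : Measure α}
    [IsFiniteMeasure μ] {f : α → ℝ} (hf : Measurable f) :
    Integrable (fun ω => stdNormalCDF (f ω)) μ := by
  rw [stdNormalCDF_eq_cdf]
  refine .of_bound ((monotone_cdf _).measurable.comp hf).aestronglyMeasurable 1
    (Eventually.of_forall fun ω => ?_)
  rw [Real.norm_of_nonneg (cdf_nonneg _ _)]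
  exact cdf_le_one _ _

lemma stdNormalCDF_sub_stdNormalCDF (x y : ℝ) :
    stdNormalCDF y - stdNormalCDF x = ∫ t in x..y, gaussianPDFReal 0 1 t := by
  have hint := (integrable_gaussianPDFReal 0 1).integrableOn (s := Set.Iic x)
  have hint' := (integrable_gaussianPDFReal 0 1).integrableOn (s := Set.Iic y)
  simp only [stdNormalCDF, gaussianReal_apply_eq_integral 0 one_ne_zero, ENNReal.toReal_ofReal
    (setIntegral_nonneg measurableSet_Iic fun t _ => gaussianPDFReal_nonneg 0 1 t)]
  exact intervalIntegral.integral_Iic_sub_Iic hint hint'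

lemma stdNormalCDF_neg_sub_stdNormalCDF_neg (a b : ℝ) :
    stdNormalCDF (-a) - stdNormalCDF (-b) = ∫ t in a..b, gaussianPDFReal 0 1 t := by
  rw [stdNormalCDF_sub_stdNormalCDF, ← intervalIntegral.integral_comp_neg]
  simp [gaussianPDFReal]

lemma gaussianPDFReal_zero_one_antitoneOn : AntitoneOn (gaussianPDFReal 0 1) (Set.Ici 0) := by
  intro a ha t ht hat
  simp only [gaussianPDFReal, sub_zero]
  gcongr

/-- Compare `φ` with the chord `t ↦ φ(a) t / a`, which lies above `φ` on `[a, ∞)` and below it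
on `[0, a]`. -/
lemma integral_gaussianPDFReal_le {a b : ℝ} (ha : 0 < a) (hb : 0 ≤ b) :
    ∫ t in a..b, gaussianPDFReal 0 1 t ≤ gaussianPDFReal 0 1 a * (b ^ 2 - a ^ 2) / (2 * a) := by
  set φa := gaussianPDFReal 0 1 a
  have hchord : ∫ t in a..b, φa / a * t = φa * (b ^ 2 - a ^ 2) / (2 * a) := by
    rw [intervalIntegral.integral_const_mul, integral_id]
    field_simp
  have hφ : IntervalIntegrable (gaussianPDFReal 0 1) volume a b :=
    (integrable_gaussianPDFReal 0 1).intervalIntegrable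
  have hlin : ∀ c d : ℝ, IntervalIntegrable (fun t => φa / a * t) volume c d := fun c d =>
    (continuous_const.mul continuous_id).intervalIntegrable c d
  have hφa : 0 ≤ φa := gaussianPDFReal_nonneg 0 1 a
  rw [← hchord]
  rcases le_total a b with hab | hba
  · refine intervalIntegral.integral_mono_on hab hφ (hlin a b) fun t ht => ?_
    calc gaussianPDFReal 0 1 t ≤ φa :=
          gaussianPDFReal_zero_one_antitoneOn ha.le (ha.le.trans ht.1) ht.1
      _ ≤ φa / a * t := by
          rw [div_mul_eq_mul_div, le_div_iff₀ ha]
          exact mul_le_mul_of_nonneg_left ht.1 hφa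
  · rw [intervalIntegral.integral_symm, intervalIntegral.integral_symm b, neg_le_neg_iff]
    refine intervalIntegral.integral_mono_on hba (hlin b a) hφ.symm fun t ht => ?_
    calc φa / a * t ≤ φa := by
          rw [div_mul_eq_mul_div, div_le_iff₀ ha]
          exact mul_le_mul_of_nonneg_left ht.2 hφa
      _ ≤ gaussianPDFReal 0 1 t :=
          gaussianPDFReal_zero_one_antitoneOn (hb.trans ht.1) ha.le ht.2

lemma stdNormalCDF_neg_sub_le {a b : ℝ} (ha : 0 < a) (hb : 0 ≤ b) :
    stdNormalCDF (-a) - gaussianPDFReal 0 1 a * (b ^ 2 - a ^ 2) / (2 * a)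
      ≤ stdNormalCDF (-b) := by
  have := integral_gaussianPDFReal_le ha hb
  rw [← stdNormalCDF_neg_sub_stdNormalCDF_neg] at this
  linarith

/-- The left side is the tangent line at `m` of the convex function `x ↦ Φ(-c√x)`. -/
lemma stdNormalCDF_neg_mul_sqrt_tangent_le {c m x : ℝ} (hc : 0 < c) (hm : 0 < m)
    (hx : 0 ≤ x) :
    stdNormalCDF (-(c * √m)) - c * gaussianPDFReal 0 1 (c * √m) / (2 * √m) * (x - m)
      ≤ stdNormalCDF (-(c * √x)) := by
  have hsm : 0 < √m := Real.sqrt_pos.2 hm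
  convert stdNormalCDF_neg_sub_le (mul_pos hc hsm) (mul_nonneg hc.le (Real.sqrt_nonneg x))
    using 2
  rw [mul_pow, mul_pow, Real.sq_sqrt hx, Real.sq_sqrt hm.le]
  field_simp

lemma le_integral_of_affine_minorant {α : Type*} [MeasurableSpace α] {μ : Measure α}
    [IsProbabilityMeasure μ] {f h : α → ℝ} {a k m : ℝ} (hf : Integrable f μ)
    (hm : ∫ x, f x ∂μ = m) (hh : Integrable h μ) (hmin : ∀ ω, a - k * (f ω - m) ≤ h ω) :
    a ≤ ∫ ω, h ω ∂μ := by
  have hdev : Integrable (fun ω => k * (f ω - m)) μ :=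
    (hf.sub (integrable_const m)).const_mul k
  calc a = ∫ ω, a - k * (f ω - m) ∂μ := by
        rw [integral_sub (integrable_const a) hdev, integral_const_mul,
          integral_sub hf (integrable_const m), hm]
        simp
    _ ≤ ∫ ω, h ω ∂μ := integral_mono ((integrable_const a).sub hdev) hh hmin

section GaussianVector

variable {Ω : Type*} [MeasurableSpace Ω] {P : Measure Ω} {d : ℕ} {ε : Ω → Fin d → ℝ}

lemma integrable_quadForm_comp (hεm : Measurable ε) (hε : P.map ε = mvGaussian 0 1)
    (A : Matrix (Fin d) (Fin d) ℝ) : Integrable (fun ω => quadForm A (ε ω)) P := by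
  refine (integrable_map_measure (continuous_quadForm A).aestronglyMeasurable
    hεm.aemeasurable).1 ?_
  rw [hε]
  exact integrable_quadForm integrable_eval_mul_eval_stdGaussian A

lemma integral_quadForm_comp (hεm : Measurable ε) (hε : P.map ε = mvGaussian 0 1)
    (A : Matrix (Fin d) (Fin d) ℝ) : ∫ ω, quadForm A (ε ω) ∂P = A.trace := by
  rw [← integral_map hεm.aemeasurable (continuous_quadForm A).aestronglyMeasurable, hε,
    integral_quadForm_stdGaussian]

end GaussianVector

/-- Jensen lower bound on the expected acceptance probability: for `ε ∼ N(0, I_d)` and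
positive definite `F`, `2 E[Φ(−(ℓ/(2√d))‖ε‖_F)] ≥ 2 Φ(−(ℓ/2)√((1/d)∑ᵢ Fᵢᵢ))`. -/
theorem acceptance_jensen_lower_bound {d : ℕ} (hd : 1 ≤ d)
    (F : Matrix (Fin d) (Fin d) ℝ) (hF : F.PosDef)
    {Ω : Type*} [MeasureSpace Ω] [IsProbabilityMeasure (ℙ : Measure Ω)]
    (ε : Ω → (Fin d → ℝ)) (hεm : Measurable ε)
    (hε : Measure.map ε ℙ = mvGaussian 0 1)
    (l : ℝ) (hl : 0 < l) :
    2 * ∫ ω, stdNormalCDF (-(l / (2 * Real.sqrt (d : ℝ))) * Real.sqrt (quadForm F (ε ω))) ∂ℙ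
      ≥ 2 * stdNormalCDF (-(l / 2) * Real.sqrt ((1 / (d : ℝ)) * ∑ i, F i i)) := by
  have : Nonempty (Fin d) := ⟨⟨0, hd⟩⟩
  have hd0 : (0 : ℝ) < d := by exact_mod_cast hd
  set c := l / (2 * √(d : ℝ))
  have hc : 0 < c := by positivity
  have hrhs : -(l / 2) * √((1 / (d : ℝ)) * ∑ i, F i i) = -(c * √F.trace) := by
    rw [Real.sqrt_mul (by positivity), one_div, Real.sqrt_inv]
    simp only [c, trace, diag_apply]
    field_simp
  have hQ := integrable_quadForm_comp hεm hε F
  have hΦ : Integrable (fun ω => stdNormalCDF (-(c * √(quadForm F (ε ω))))) ℙ :=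
    integrable_stdNormalCDF_comp (measurable_const.mul
      ((continuous_quadForm F).measurable.comp hεm).sqrt).neg
  simp_rw [hrhs, neg_mul, ge_iff_le]
  gcongr
  exact le_integral_of_affine_minorant hQ (integral_quadForm_comp hεm hε F) hΦ fun ω =>
    stdNormalCDF_neg_mul_sqrt_tangent_le hc hF.trace_pos (quadForm_nonneg hF.posSemidef _)
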